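/- arXiv:2010.14430 — 2 statements merged into one kernel-verified Lean document; each statement's English description precedes it below -/
import Mathlib

section
/- Let ξ = ηx.χ be a tidy fixpoint formula with ξ ∉ Clos(χ). Then ξ is a free subformula of every formula ρ in the closure cluster of ξ, i.e., ξ ⊴_f ρ for all ρ ≡_C ξ. -/
/-- Formulas of the modal μ-calculus: literals, ⊤, ⊥, ∧, ∨, ◇, □ and
fixpoint operators `fix b x φ` where `b = true` stands for μ and `b = false` for ν. -/
inductive Fm : Type
  | var  (p : ℕ)
  | nvar (p : ℕ)
  | tt
  | ff
  | conj (φ ψ : Fm)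
  | disj (φ ψ : Fm)
  | dia (φ : Fm)
  | box (φ : Fm)
  | fix (b : Bool) (x : ℕ) (φ : Fm)
  deriving DecidableEq

namespace Fm

/-- Free variables. -/
def FV : Fm → Finset ℕ
  | var p => {p}
  | nvar p => {p}
  | tt => ∅
  | ff => ∅
  | conj φ ψ => FV φ ∪ FV ψ
  | disj φ ψ => FV φ ∪ FV ψ
  | dia φ => FV φ
  | box φ => FV φ
  | fix _ x φ => FV φ \ {x}

/-- Bound variables. -/
def BV : Fm → Finset ℕ
  | conj φ ψ => BV φ ∪ BV ψ
  | disj φ ψ => BV φ ∪ BV ψ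
  | dia φ => BV φ
  | box φ => BV φ
  | fix _ x φ => insert x (BV φ)
  | _ => ∅

/-- Length (number of symbols). -/
def len : Fm → ℕ
  | conj φ ψ => len φ + len ψ + 1
  | disj φ ψ => len φ + len ψ + 1
  | dia φ => len φ + 1
  | box φ => len φ + 1
  | fix _ _ φ => len φ + 1
  | _ => 1

/-- Substitution `φ[ξ/x]` of `ξ` for the free occurrences of `x` in `φ`. -/
def subst : Fm → ℕ → Fm → Fm
  | var p, x, ξ => if p = x then ξ else var p
  | nvar p, _, _ => nvar p
  | tt, _, _ => tt
  | ff, _, _ => ff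
  | conj φ ψ, x, ξ => conj (subst φ x ξ) (subst ψ x ξ)
  | disj φ ψ, x, ξ => disj (subst φ x ξ) (subst ψ x ξ)
  | dia φ, x, ξ => dia (subst φ x ξ)
  | box φ, x, ξ => box (subst φ x ξ)
  | fix b y φ, x, ξ => if y = x then fix b y φ else fix b y (subst φ x ξ)

/-- `ξ` is free for `x` in the given formula (no capture when substituting). -/
def FreeFor (ξ : Fm) (x : ℕ) : Fm → Prop
  | conj φ ψ => FreeFor ξ x φ ∧ FreeFor ξ x ψ
  | disj φ ψ => FreeFor ξ x φ ∧ FreeFor ξ x ψ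
  | dia φ => FreeFor ξ x φ
  | box φ => FreeFor ξ x φ
  | fix b y φ => x ∉ FV (fix b y φ) ∨ (y ∉ FV ξ ∧ FreeFor ξ x φ)
  | _ => True

/-- A formula is tidy if its free and bound variables are disjoint. -/
def Tidy (φ : Fm) : Prop := Disjoint (FV φ) (BV φ)

/-- Fixpoint formulas. -/
def IsFix : Fm → Prop
  | fix _ _ _ => True
  | _ => False

/-- The main fixpoint operator of a formula, if any (`true` = μ, `false` = ν). -/
def fixOp : Fm → Option Bool
  | fix b _ _ => some b
  | _ => none

/-- Fixpoint-free formulas. -/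
def NoFix : Fm → Prop
  | conj φ ψ => NoFix φ ∧ NoFix ψ
  | disj φ ψ => NoFix φ ∧ NoFix ψ
  | dia φ => NoFix φ
  | box φ => NoFix φ
  | fix _ _ _ => False
  | _ => True

/-- The trace relation `→_C`: boolean/modal decomposition and unfolding of fixpoints. -/
inductive Trace : Fm → Fm → Prop
  | conjL {φ ψ} : Trace (conj φ ψ) φ
  | conjR {φ ψ} : Trace (conj φ ψ) ψ
  | disjL {φ ψ} : Trace (disj φ ψ) φ
  | disjR {φ ψ} : Trace (disj φ ψ) ψ
  | diaT {φ} : Trace (dia φ) φ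
  | boxT {φ} : Trace (box φ) φ
  | fixT {b x φ} : Trace (fix b x φ) (subst φ x (fix b x φ))

/-- `φ ↠_C ψ` : there is a (possibly empty) trace from `φ` to `ψ`. -/
def Traces : Fm → Fm → Prop := Relation.ReflTransGen Trace

/-- The closure of a formula. -/
def Clos (φ : Fm) : Set Fm := {ψ | Traces φ ψ}

/-- Closure (cluster) equivalence: mutual `→_C`-reachability. -/
def ClosEq (φ ψ : Fm) : Prop := Traces φ ψ ∧ Traces ψ φ

/-- The closure cluster of a formula. -/
def Cluster (φ : Fm) : Set Fm := {ρ | ClosEq φ ρ}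

/-- The free subformula relation `φ ⊴_f ψ`. -/
def FreeSubf (φ ψ : Fm) : Prop :=
  ∃ χ y, y ∈ FV χ ∧ FreeFor φ y χ ∧ subst χ y φ = ψ

/-- `Reach χ a b` : there is a trace from `a` to `b` on which every formula
has `χ` as a free subformula (`a ↠_C^χ b`). -/
def Reach (χ a b : Fm) : Prop :=
  FreeSubf χ a ∧ Relation.ReflTransGen (fun u v => Trace u v ∧ FreeSubf χ v) a b

/-- The closure priority relation: `φ ⊑_C ψ` iff `ψ ↠_C^ψ φ`. -/
def Prio (φ ψ : Fm) : Prop := Reach ψ ψ φ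

/-- The strict closure priority relation `φ ⊏_C ψ`. -/
def SPrio (φ ψ : Fm) : Prop := Prio φ ψ ∧ φ ≠ ψ

/-- An alternating `⊏_C`-chain, presented as a list (bottom first). -/
def AltChain (l : List Fm) : Prop :=
  (∀ φ ∈ l, IsFix φ) ∧ List.Chain' (fun a b => SPrio a b ∧ fixOp a ≠ fixOp b) l

/-- `h↑(ψ)` : maximal length of an alternating `⊏_C`-chain starting at `ψ`. -/
noncomputable def hUp (ψ : Fm) : ℕ :=
  sSup {n | ∃ l, AltChain l ∧ l.head? = some ψ ∧ l.length = n}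

/-- `h↓(ψ)` : maximal length of an alternating `⊏_C`-chain leading up to `ψ`. -/
noncomputable def hDown (ψ : Fm) : ℕ :=
  sSup {n | ∃ l, AltChain l ∧ l.getLast? = some ψ ∧ l.length = n}

/-- `cd(C(ψ))` : maximal length of an alternating `⊏_C`-chain in the cluster of `ψ`. -/
noncomputable def cdC (ψ : Fm) : ℕ :=
  sSup {n | ∃ l, AltChain l ∧ (∀ a ∈ l, ClosEq ψ a) ∧ l.length = n}

/-- The global priority map `Ω_g` (μ odd, ν even), defined on fixpoint formulas
(junk value elsewhere). -/
noncomputable def Omg (ψ : Fm) : ℕ :=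
  if ((cdC ψ - hUp ψ) % 2 == 0) == (fixOp ψ == some false)
  then cdC ψ - hUp ψ else cdC ψ - hUp ψ + 1

/-- `cd_η(ξ)` : maximal length of an alternating `⊏_C`-chain inside a single
cluster of `Clos(ξ)` leading up to an `η`-formula. -/
noncomputable def cdEta (η : Bool) (ξ : Fm) : ℕ :=
  sSup {n | ∃ l, AltChain l ∧ (∀ a ∈ l, a ∈ Clos ξ) ∧ (∀ a ∈ l, ∀ c ∈ l, ClosEq a c) ∧
      l.length = n ∧ ∃ ψ, l.getLast? = some ψ ∧ fixOp ψ = some η}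

/-- `cd(ξ)` : maximal length of an alternating `⊏_C`-chain inside a single
cluster of `Clos(ξ)`. -/
noncomputable def cd (ξ : Fm) : ℕ :=
  sSup {n | ∃ l, AltChain l ∧ (∀ a ∈ l, a ∈ Clos ξ) ∧ (∀ a ∈ l, ∀ c ∈ l, ClosEq a c) ∧
      l.length = n}

/-- The alternation hierarchy classes `Θ_η^n`:  `Θ_η^n` contains the fixpoint-free
formulas, is closed under the boolean and modal operations, contains `η`-fixpoints
of its members (for `n ≥ 1`), contains `Θ_{η̄}^{n-1}`, and is closed under
substitution of its members. -/
inductive AH : Bool → ℕ → Fm → Prop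
  | nofix {η n φ} : NoFix φ → AH η n φ
  | conjC {η n φ ψ} : AH η n φ → AH η n ψ → AH η n (conj φ ψ)
  | disjC {η n φ ψ} : AH η n φ → AH η n ψ → AH η n (disj φ ψ)
  | diaC {η n φ} : AH η n φ → AH η n (dia φ)
  | boxC {η n φ} : AH η n φ → AH η n (box φ)
  | fixC {η n x φ} : AH η n φ → 1 ≤ n → AH η n (fix η x φ)
  | oppC {η n φ} : AH (!η) n φ → AH η (n + 1) φ
  | subC {η n x φ ξ} : AH η n φ → AH η n ξ → AH η n (subst φ x ξ)

/-- `ad_η(φ)` : the least `n` with `φ ∈ Θ_η^n`. -/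
noncomputable def adEta (η : Bool) (φ : Fm) : ℕ := sInf {n | AH η n φ}

/-- The alternation depth: the least `n` with `φ ∈ Θ_μ^n ∩ Θ_ν^n`. -/
noncomputable def ad (φ : Fm) : ℕ := sInf {n | AH true n φ ∧ AH false n φ}

/-- The index of the parity formula `G_ξ` based on the closure graph of `ξ` with
the global priority map: the maximal number of priorities of alternating parity
along a chain inside a single cluster. -/
noncomputable def indG (ξ : Fm) : ℕ :=
  sSup {n | ∃ l : List Fm, l.length = n ∧ (∀ a ∈ l, a ∈ Clos ξ ∧ IsFix a) ∧
    (∀ a ∈ l, ∀ c ∈ l, ClosEq a c) ∧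
    List.Chain' (fun a b => Omg a < Omg b ∧ Omg a % 2 ≠ Omg b % 2) l}

/-- Kripke semantics of the μ-calculus. -/
def Sat {W : Type} (R : W → W → Prop) : Fm → (ℕ → Set W) → Set W
  | var p, Vl => Vl p
  | nvar p, Vl => (Vl p)ᶜ
  | tt, _ => Set.univ
  | ff, _ => ∅
  | conj φ ψ, Vl => Sat R φ Vl ∩ Sat R ψ Vl
  | disj φ ψ, Vl => Sat R φ Vl ∪ Sat R ψ Vl
  | dia φ, Vl => {w | ∃ u, R w u ∧ u ∈ Sat R φ Vl}
  | box φ, Vl => {w | ∀ u, R w u → u ∈ Sat R φ Vl}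
  | fix b x φ, Vl =>
      if b then ⋂₀ {S | Sat R φ (Function.update Vl x S) ⊆ S}
      else ⋃₀ {S | S ⊆ Sat R φ (Function.update Vl x S)}

/-! ### The evaluation game of the parity formula `G_ξ` built on the closure graph -/

inductive Player : Type
  | eve
  | adam
  deriving DecidableEq

-- The owner of a position of the evaluation game.
open Classical in
noncomputable def owner {W : Type} (Vl : ℕ → Set W) : Fm × W → Player := fun pw =>
  match pw.1 with
  | var p => if pw.2 ∈ Vl p then .adam else .eve
  | nvar p => if pw.2 ∈ Vl p then .eve else .adam
  | tt => .adam
  | ff => .eve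
  | conj _ _ => .adam
  | disj _ _ => .eve
  | dia _ => .eve
  | box _ => .adam
  | fix _ _ _ => .eve

/-- The admissible moves of the evaluation game: the parity-formula edges are the
trace relation, and modal nodes also move along the accessibility relation. -/
inductive Move {W : Type} (R : W → W → Prop) : Fm × W → Fm × W → Prop
  | conjL {φ ψ w} : Move R (conj φ ψ, w) (φ, w)
  | conjR {φ ψ w} : Move R (conj φ ψ, w) (ψ, w)
  | disjL {φ ψ w} : Move R (disj φ ψ, w) (φ, w)
  | disjR {φ ψ w} : Move R (disj φ ψ, w) (ψ, w)
  | diaM {φ w u} : R w u → Move R (dia φ, w) (φ, u)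
  | boxM {φ w u} : R w u → Move R (box φ, w) (φ, u)
  | fixM {b x φ w} : Move R (fix b x φ, w) (subst φ x (fix b x φ), w)

/-- The priority of a vertex of `G_ξ` : `Ω_g`, defined on fixpoint formulas only. -/
noncomputable def prio? (φ : Fm) : Option ℕ :=
  match φ with
  | fix b x ψ => some (Omg (fix b x ψ))
  | _ => none

/-- Priority `p` occurs infinitely often on the play `f`. -/
def InfOft {W : Type} (f : ℕ → Fm × W) (p : ℕ) : Prop :=
  ∀ N, ∃ n, N ≤ n ∧ prio? (f n).1 = some p

/-- Eve wins an infinite play iff the maximal priority occurring infinitely often is even. -/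
def EveWinsPlay {W : Type} (f : ℕ → Fm × W) : Prop :=
  ∃ p, p % 2 = 0 ∧ InfOft f p ∧ ∀ q, InfOft f q → q ≤ p

/-- A step consistent with Eve's positional strategy `σ`. -/
def Step {W : Type} (R : W → W → Prop) (Vl : ℕ → Set W) (σ : Fm × W → Fm × W) :
    Fm × W → Fm × W → Prop := fun p q =>
  Move R p q ∧ (owner Vl p = .eve → q = σ p)

/-- Eve has a winning (positional) strategy from position `p₀` in the evaluation game. -/
def EveWins {W : Type} (R : W → W → Prop) (Vl : ℕ → Set W) (p₀ : Fm × W) : Prop :=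
  ∃ σ : Fm × W → Fm × W,
    (∀ p, Relation.ReflTransGen (Step R Vl σ) p₀ p → owner Vl p = .eve → Move R p (σ p)) ∧
    (∀ f : ℕ → Fm × W, f 0 = p₀ → (∀ n, Step R Vl σ (f n) (f (n + 1))) → EveWinsPlay f)

end Fm

namespace Fm

/-- Positive free variables: those occurring freely as `var` (substitutable). -/
def PFV : Fm → Finset ℕ
  | var p => {p}
  | conj φ ψ => PFV φ ∪ PFV ψ
  | disj φ ψ => PFV φ ∪ PFV ψ
  | dia φ => PFV φ
  | box φ => PFV φ
  | fix _ x φ => PFV φ \ {x}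
  | _ => ∅

theorem pfv_subset_fv : ∀ φ : Fm, PFV φ ⊆ FV φ := by
  intro φ
  induction φ with
  | var p => simp [PFV, FV]
  | nvar p => simp [PFV, FV]
  | tt => simp [PFV, FV]
  | ff => simp [PFV, FV]
  | conj φ ψ ih1 ih2 => simp only [PFV, FV]; exact Finset.union_subset_union ih1 ih2
  | disj φ ψ ih1 ih2 => simp only [PFV, FV]; exact Finset.union_subset_union ih1 ih2
  | dia φ ih => exact ih
  | box φ ih => exact ih
  | fix b y φ ih => simp only [PFV, FV]; exact Finset.sdiff_subset_sdiff ih le_rfl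

theorem subst_notMem {φ : Fm} {x : ℕ} (ξ : Fm) (h : x ∉ PFV φ) : subst φ x ξ = φ := by
  induction φ with
  | var p =>
      simp only [PFV, Finset.mem_singleton] at h
      exact if_neg (fun hpx => h hpx.symm)
  | nvar p => rfl
  | tt => rfl
  | ff => rfl
  | conj φ ψ ih1 ih2 =>
      simp only [PFV, Finset.mem_union, not_or] at h
      simp only [subst, ih1 h.1, ih2 h.2]
  | disj φ ψ ih1 ih2 =>
      simp only [PFV, Finset.mem_union, not_or] at h
      simp only [subst, ih1 h.1, ih2 h.2]
  | dia φ ih => simp only [PFV] at h; simp only [subst, ih h]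
  | box φ ih => simp only [PFV] at h; simp only [subst, ih h]
  | fix b y φ ih =>
      simp only [PFV, Finset.mem_sdiff, Finset.mem_singleton, not_and, not_not] at h
      simp only [subst]
      by_cases hyx : y = x
      · simp [hyx]
      · have hx : x ∉ PFV φ := fun hxp => hyx (h hxp).symm
        rw [if_neg hyx, ih hx]

theorem subst_var_self (φ : Fm) (x : ℕ) : subst φ x (var x) = φ := by
  induction φ with
  | var p =>
      simp only [subst]
      by_cases hpx : p = x
      · simp [hpx]
      · simp [hpx]
  | nvar p => rfl
  | tt => rfl
  | ff => rfl
  | conj φ ψ ih1 ih2 => simp only [subst, ih1, ih2]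
  | disj φ ψ ih1 ih2 => simp only [subst, ih1, ih2]
  | dia φ ih => simp only [subst, ih]
  | box φ ih => simp only [subst, ih]
  | fix b y φ ih =>
      simp only [subst]
      by_cases hyx : y = x <;> simp [hyx, ih]

theorem PFV_subst (φ : Fm) (x : ℕ) (ξ : Fm) :
    PFV (subst φ x ξ) ⊆ (PFV φ \ {x}) ∪ PFV ξ := by
  induction φ with
  | var p =>
      by_cases hpx : p = x
      · simp [subst, hpx]
      · simp only [subst, if_neg hpx, PFV]
        intro a ha
        simp only [Finset.mem_singleton] at ha
        subst ha
        simp [hpx]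
  | nvar p => simp [subst, PFV]
  | tt => simp [subst, PFV]
  | ff => simp [subst, PFV]
  | conj φ ψ ih1 ih2 =>
      simp only [subst, PFV]
      intro a ha
      rcases Finset.mem_union.1 ha with h | h
      · rcases Finset.mem_union.1 (ih1 h) with h' | h'
        · simp only [Finset.mem_sdiff, Finset.mem_singleton] at h'
          simp [Finset.mem_sdiff, h'.1, h'.2]
        · simp [h']
      · rcases Finset.mem_union.1 (ih2 h) with h' | h'
        · simp only [Finset.mem_sdiff, Finset.mem_singleton] at h'
          simp [Finset.mem_sdiff, h'.1, h'.2]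
        · simp [h']
  | disj φ ψ ih1 ih2 =>
      simp only [subst, PFV]
      intro a ha
      rcases Finset.mem_union.1 ha with h | h
      · rcases Finset.mem_union.1 (ih1 h) with h' | h'
        · simp only [Finset.mem_sdiff, Finset.mem_singleton] at h'
          simp [Finset.mem_sdiff, h'.1, h'.2]
        · simp [h']
      · rcases Finset.mem_union.1 (ih2 h) with h' | h'
        · simp only [Finset.mem_sdiff, Finset.mem_singleton] at h'
          simp [Finset.mem_sdiff, h'.1, h'.2]
        · simp [h']
  | dia φ ih => simpa [subst, PFV] using ih
  | box φ ih => simpa [subst, PFV] using ih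
  | fix b y φ ih =>
      simp only [subst]
      by_cases hyx : y = x
      · subst hyx
        simp only [if_pos rfl, PFV]
        intro a ha
        simp only [↓reduceIte, if_true, eq_self_iff_true, PFV, Finset.mem_sdiff, Finset.mem_singleton] at ha
        simp [Finset.mem_sdiff, ha.1, ha.2]
      · simp only [if_neg hyx, PFV]
        intro a ha
        simp only [Finset.mem_sdiff, Finset.mem_singleton] at ha
        rcases Finset.mem_union.1 (ih ha.1) with h' | h'
        · simp only [Finset.mem_sdiff, Finset.mem_singleton] at h'
          simp only [Finset.mem_union, Finset.mem_sdiff, Finset.mem_singleton]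
          exact Or.inl ⟨⟨h'.1, ha.2⟩, h'.2⟩
        · simp [h']

theorem FV_subst (φ : Fm) (x : ℕ) (ξ : Fm) :
    FV (subst φ x ξ) ⊆ FV φ ∪ FV ξ := by
  induction φ with
  | var p =>
      by_cases hpx : p = x
      · simp [subst, hpx]
      · simp [subst, hpx]
  | nvar p => simp [subst]
  | tt => simp [subst]
  | ff => simp [subst]
  | conj φ ψ ih1 ih2 =>
      simp only [subst, FV]
      intro a ha
      rcases Finset.mem_union.1 ha with h | h
      · rcases Finset.mem_union.1 (ih1 h) with h' | h' <;> simp [h']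
      · rcases Finset.mem_union.1 (ih2 h) with h' | h' <;> simp [h']
  | disj φ ψ ih1 ih2 =>
      simp only [subst, FV]
      intro a ha
      rcases Finset.mem_union.1 ha with h | h
      · rcases Finset.mem_union.1 (ih1 h) with h' | h' <;> simp [h']
      · rcases Finset.mem_union.1 (ih2 h) with h' | h' <;> simp [h']
  | dia φ ih => simpa [subst, FV] using ih
  | box φ ih => simpa [subst, FV] using ih
  | fix b y φ ih =>
      simp only [subst]
      by_cases hyx : y = x
      · simp [hyx]
      · simp only [if_neg hyx, FV]
        intro a ha
        simp only [Finset.mem_sdiff, Finset.mem_singleton] at ha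
        rcases Finset.mem_union.1 (ih ha.1) with h' | h'
        · simp only [Finset.mem_union, Finset.mem_sdiff, Finset.mem_singleton]
          exact Or.inl ⟨h', ha.2⟩
        · simp [h']

theorem BV_subst (φ : Fm) (x : ℕ) (ξ : Fm) :
    BV (subst φ x ξ) ⊆ BV φ ∪ BV ξ := by
  induction φ with
  | var p =>
      by_cases hpx : p = x <;> simp [subst, hpx, BV]
  | nvar p => simp [subst, BV]
  | tt => simp [subst, BV]
  | ff => simp [subst, BV]
  | conj φ ψ ih1 ih2 =>
      simp only [subst, BV]
      intro a ha
      rcases Finset.mem_union.1 ha with h | h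
      · rcases Finset.mem_union.1 (ih1 h) with h' | h' <;> simp [h']
      · rcases Finset.mem_union.1 (ih2 h) with h' | h' <;> simp [h']
  | disj φ ψ ih1 ih2 =>
      simp only [subst, BV]
      intro a ha
      rcases Finset.mem_union.1 ha with h | h
      · rcases Finset.mem_union.1 (ih1 h) with h' | h' <;> simp [h']
      · rcases Finset.mem_union.1 (ih2 h) with h' | h' <;> simp [h']
  | dia φ ih => simpa [subst, BV] using ih
  | box φ ih => simpa [subst, BV] using ih
  | fix b y φ ih =>
      simp only [subst]
      by_cases hyx : y = x
      · simp only [hyx, if_pos]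
        exact fun a ha => Finset.mem_union_left _ ha
      · simp only [if_neg hyx, BV]
        intro a ha
        simp only [Finset.mem_insert] at ha
        rcases ha with rfl | ha
        · simp
        · rcases Finset.mem_union.1 (ih ha) with h' | h' <;> simp [h']

theorem trace_PFV {φ ψ : Fm} (h : Trace φ ψ) : PFV ψ ⊆ PFV φ := by
  cases h with
  | conjL => simp [PFV]
  | conjR => simp [PFV]
  | disjL => simp [PFV]
  | disjR => simp [PFV]
  | diaT => simp [PFV]
  | boxT => simp [PFV]
  | fixT =>
      refine (PFV_subst _ _ _).trans ?_
      simp [PFV]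

theorem trace_BV {φ ψ : Fm} (h : Trace φ ψ) : BV ψ ⊆ BV φ := by
  cases h with
  | conjL => simp [BV]
  | conjR => simp [BV]
  | disjL => simp [BV]
  | disjR => simp [BV]
  | diaT => simp [BV]
  | boxT => simp [BV]
  | fixT =>
      refine (BV_subst _ _ _).trans ?_
      simp [BV]

theorem trace_vars {φ ψ : Fm} (h : Trace φ ψ) : FV ψ ∪ BV ψ ⊆ FV φ ∪ BV φ := by
  cases h with
  | conjL => simp only [FV, BV]
             exact Finset.union_subset_union Finset.subset_union_left Finset.subset_union_left
  | conjR => simp only [FV, BV]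
             exact Finset.union_subset_union Finset.subset_union_right Finset.subset_union_right
  | disjL => simp only [FV, BV]
             exact Finset.union_subset_union Finset.subset_union_left Finset.subset_union_left
  | disjR => simp only [FV, BV]
             exact Finset.union_subset_union Finset.subset_union_right Finset.subset_union_right
  | diaT => simp [FV, BV]
  | boxT => simp [FV, BV]
  | @fixT b x φ =>
      intro a ha
      rcases Finset.mem_union.1 ha with h | h
      · rcases Finset.mem_union.1 (FV_subst _ _ _ h) with h' | h'
        · by_cases hax : a = x
          · simp [BV, hax]
          · simp only [Finset.mem_union, FV, BV, Finset.mem_sdiff, Finset.mem_singleton]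
            exact Or.inl ⟨h', hax⟩
        · simp [h']
      · have := BV_subst φ x (fix b x φ) h
        rcases Finset.mem_union.1 this with h' | h'
        · simp [BV, h']
        · simp [h']

theorem traces_PFV {φ ψ : Fm} (h : Traces φ ψ) : PFV ψ ⊆ PFV φ := by
  induction h with
  | refl => exact fun _ h => h
  | tail _ h2 ih => exact (trace_PFV h2).trans ih

theorem traces_BV {φ ψ : Fm} (h : Traces φ ψ) : BV ψ ⊆ BV φ := by
  induction h with
  | refl => exact fun _ h => h
  | tail _ h2 ih => exact (trace_BV h2).trans ih

theorem traces_vars {φ ψ : Fm} (h : Traces φ ψ) : FV ψ ∪ BV ψ ⊆ FV φ ∪ BV φ := by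
  induction h with
  | refl => exact fun _ h => h
  | tail _ h2 ih => exact (trace_vars h2).trans ih


/-- Subtree relation. -/
inductive SubT (ξ : Fm) : Fm → Prop
  | refl : SubT ξ ξ
  | cjL {a b} : SubT ξ a → SubT ξ (conj a b)
  | cjR {a b} : SubT ξ b → SubT ξ (conj a b)
  | djL {a b} : SubT ξ a → SubT ξ (disj a b)
  | djR {a b} : SubT ξ b → SubT ξ (disj a b)
  | di {a} : SubT ξ a → SubT ξ (dia a)
  | bo {a} : SubT ξ a → SubT ξ (box a)
  | fx {b y a} : SubT ξ a → SubT ξ (fix b y a)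

/-- Expansion relation for the closure of `fix b x χ`. -/
inductive Exp (b : Bool) (x : ℕ) (χ : Fm) : Fm → Fm → Prop
  | repBase {g} : Exp b x χ g (fix b x χ)
  | repMk {g γ e} : Traces χ γ → Exp b x χ γ e → SubT (fix b x χ) e → x ∉ PFV e →
      PFV e ⊆ PFV (fix b x χ) → Exp b x χ g e
  | avar {p} : Exp b x χ (var p) (var p)
  | anvar {p} : Exp b x χ (nvar p) (nvar p)
  | att : Exp b x χ tt tt
  | aff : Exp b x χ ff ff
  | cconj {a₁ a₂ c₁ c₂} : Exp b x χ a₁ c₁ → Exp b x χ a₂ c₂ →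
      Exp b x χ (conj a₁ a₂) (conj c₁ c₂)
  | cdisj {a₁ a₂ c₁ c₂} : Exp b x χ a₁ c₁ → Exp b x χ a₂ c₂ →
      Exp b x χ (disj a₁ a₂) (disj c₁ c₂)
  | cdia {a c} : Exp b x χ a c → Exp b x χ (dia a) (dia c)
  | cbox {a c} : Exp b x χ a c → Exp b x χ (box a) (box c)
  | cfix {b' y a c} : Exp b x χ a c → Exp b x χ (fix b' y a) (fix b' y c)

theorem exp_refl (b : Bool) (x : ℕ) (χ : Fm) : ∀ φ : Fm, Exp b x χ φ φ := by
  intro φ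
  induction φ with
  | var p => exact .avar
  | nvar p => exact .anvar
  | tt => exact .att
  | ff => exact .aff
  | conj φ ψ ih1 ih2 => exact .cconj ih1 ih2
  | disj φ ψ ih1 ih2 => exact .cdisj ih1 ih2
  | dia φ ih => exact .cdia ih
  | box φ ih => exact .cbox ih
  | fix b' y φ ih => exact .cfix ih

theorem exp_PFV {b : Bool} {x : ℕ} {χ a c : Fm} (h : Exp b x χ a c) :
    PFV c ⊆ PFV a ∪ PFV (fix b x χ) := by
  induction h with
  | repBase => exact Finset.subset_union_right
  | repMk _ _ _ _ hFV => exact hFV.trans Finset.subset_union_right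
  | avar => exact Finset.subset_union_left
  | anvar => exact Finset.subset_union_left
  | att => exact Finset.subset_union_left
  | aff => exact Finset.subset_union_left
  | cconj h1 h2 ih1 ih2 =>
      simp only [PFV]
      intro v hv
      rcases Finset.mem_union.1 hv with h | h
      · rcases Finset.mem_union.1 (ih1 h) with h' | h' <;> simp only [Finset.mem_union] <;> tauto
      · rcases Finset.mem_union.1 (ih2 h) with h' | h' <;> simp only [Finset.mem_union] <;> tauto
  | cdisj h1 h2 ih1 ih2 =>
      simp only [PFV]
      intro v hv
      rcases Finset.mem_union.1 hv with h | h
      · rcases Finset.mem_union.1 (ih1 h) with h' | h' <;> simp only [Finset.mem_union] <;> tauto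
      · rcases Finset.mem_union.1 (ih2 h) with h' | h' <;> simp only [Finset.mem_union] <;> tauto
  | cdia h ih => simpa [PFV] using ih
  | cbox h ih => simpa [PFV] using ih
  | cfix h ih =>
      simp only [PFV]
      intro v hv
      simp only [Finset.mem_sdiff, Finset.mem_singleton] at hv
      rcases Finset.mem_union.1 (ih hv.1) with h' | h'
      · simp only [Finset.mem_union, Finset.mem_sdiff, Finset.mem_singleton]
        exact Or.inl ⟨h', hv.2⟩
      · simp only [Finset.mem_union]
        tauto

theorem exp_cases {b : Bool} {x : ℕ} {χ a c : Fm} (h : Exp b x χ a c) :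
    c = a ∨ SubT (fix b x χ) c := by
  induction h with
  | repBase => exact Or.inr .refl
  | repMk _ _ hS _ _ => exact Or.inr hS
  | avar => exact Or.inl rfl
  | anvar => exact Or.inl rfl
  | att => exact Or.inl rfl
  | aff => exact Or.inl rfl
  | cconj h1 h2 ih1 ih2 =>
      rcases ih1 with rfl | hS
      · rcases ih2 with rfl | hS
        · exact Or.inl rfl
        · exact Or.inr (.cjR hS)
      · exact Or.inr (.cjL hS)
  | cdisj h1 h2 ih1 ih2 =>
      rcases ih1 with rfl | hS
      · rcases ih2 with rfl | hS
        · exact Or.inl rfl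
        · exact Or.inr (.djR hS)
      · exact Or.inr (.djL hS)
  | cdia h ih =>
      rcases ih with rfl | hS
      · exact Or.inl rfl
      · exact Or.inr (.di hS)
  | cbox h ih =>
      rcases ih with rfl | hS
      · exact Or.inl rfl
      · exact Or.inr (.bo hS)
  | cfix h ih =>
      rcases ih with rfl | hS
      · exact Or.inl rfl
      · exact Or.inr (.fx hS)

theorem exp_subst {b : Bool} {x y : ℕ} {χ a c G H : Fm} (hyx : y ≠ x)
    (hyξ : y ∉ PFV (fix b x χ)) (hac : Exp b x χ a c) (hGH : Exp b x χ G H) :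
    Exp b x χ (subst a y G) (subst c y H) := by
  induction hac with
  | repBase => rw [subst_notMem H hyξ]; exact .repBase
  | repMk hγ hγe hS hx hFV =>
      rw [subst_notMem H (fun hy => hyξ (hFV hy))]
      exact .repMk hγ hγe hS hx hFV
  | @avar p =>
      by_cases hpy : p = y
      · simpa [subst, hpy] using hGH
      · simpa [subst, hpy] using Exp.avar (p := p)
  | anvar => exact .anvar
  | att => exact .att
  | aff => exact .aff
  | cconj h1 h2 ih1 ih2 => exact .cconj ih1 ih2
  | cdisj h1 h2 ih1 ih2 => exact .cdisj ih1 ih2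
  | cdia h ih => exact .cdia ih
  | cbox h ih => exact .cbox ih
  | @cfix b' z a' c' h ih =>
      by_cases hzy : z = y
      · simpa [subst, hzy] using Exp.cfix h
      · simpa [subst, hzy] using Exp.cfix ih

theorem exp_subst_x {b : Bool} {x : ℕ} {χ a c R : Fm}
    (hR : ∀ g, Exp b x χ g R) (hxR : x ∉ PFV R) (hac : Exp b x χ a c) (G : Fm) :
    Exp b x χ (subst a x G) (subst c x R) := by
  induction hac with
  | repBase =>
      rw [subst_notMem R (by simp [PFV])]
      exact .repBase
  | repMk hγ hγe hS hx hFV =>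
      rw [subst_notMem R hx]
      exact .repMk hγ hγe hS hx hFV
  | @avar p =>
      by_cases hpx : p = x
      · simpa [subst, hpx] using hR G
      · simpa [subst, hpx] using Exp.avar (p := p)
  | anvar => exact .anvar
  | att => exact .att
  | aff => exact .aff
  | cconj h1 h2 ih1 ih2 => exact .cconj ih1 ih2
  | cdisj h1 h2 ih1 ih2 => exact .cdisj ih1 ih2
  | cdia h ih => exact .cdia ih
  | cbox h ih => exact .cbox ih
  | @cfix b' z a' c' h ih =>
      by_cases hzx : z = x
      · simpa [subst, hzx] using Exp.cfix h
      · simpa [subst, hzx] using Exp.cfix ih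


theorem exp_step {b : Bool} {x : ℕ} {χ : Fm} (htidy : Tidy (fix b x χ)) {γ ρ : Fm}
    (hac : Exp b x χ γ ρ) :
    Traces χ γ → ∀ ρ', Trace ρ ρ' → ∃ γ', Traces χ γ' ∧ Exp b x χ γ' ρ' := by
  induction hac with
  | repBase =>
      intro hγ ρ' hst
      cases hst with
      | fixT =>
          refine ⟨χ, Relation.ReflTransGen.refl, ?_⟩
          have h := exp_subst_x (R := fix b x χ) (fun g => Exp.repBase) (by simp [PFV])
            (exp_refl b x χ χ) (var x)
          rwa [subst_var_self] at h
  | repMk hγ' he hS hx hFV ih =>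
      intro _ ρ' hst
      exact ih hγ' ρ' hst
  | avar => intro _ ρ' hst; cases hst
  | anvar => intro _ ρ' hst; cases hst
  | att => intro _ ρ' hst; cases hst
  | aff => intro _ ρ' hst; cases hst
  | @cconj a₁ a₂ c₁ c₂ h1 h2 ih1 ih2 =>
      intro hγ ρ' hst
      cases hst with
      | conjL => exact ⟨a₁, hγ.tail Trace.conjL, h1⟩
      | conjR => exact ⟨a₂, hγ.tail Trace.conjR, h2⟩
  | @cdisj a₁ a₂ c₁ c₂ h1 h2 ih1 ih2 =>
      intro hγ ρ' hst
      cases hst with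
      | disjL => exact ⟨a₁, hγ.tail Trace.disjL, h1⟩
      | disjR => exact ⟨a₂, hγ.tail Trace.disjR, h2⟩
  | @cdia a c h ih =>
      intro hγ ρ' hst
      cases hst with
      | diaT => exact ⟨a, hγ.tail Trace.diaT, h⟩
  | @cbox a c h ih =>
      intro hγ ρ' hst
      cases hst with
      | boxT => exact ⟨a, hγ.tail Trace.boxT, h⟩
  | @cfix b' y a c h ih =>
      intro hγ ρ' hst
      cases hst with
      | fixT =>
        by_cases hyx : y = x
        · subst hyx
          rcases exp_cases h with rfl | hS
          · exact ⟨subst c y (fix b' y c), hγ.tail Trace.fixT, exp_refl _ _ _ _⟩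
          · have hxR : y ∉ PFV (fix b' y c) := by simp [PFV]
            have hFVR : PFV (fix b' y c) ⊆ PFV (fix b y χ) := by
              intro v hv
              simp only [PFV, Finset.mem_sdiff, Finset.mem_singleton] at hv ⊢
              rcases Finset.mem_union.1 (exp_PFV h hv.1) with h' | h'
              · refine ⟨traces_PFV hγ ?_, hv.2⟩
                simp only [PFV, Finset.mem_sdiff, Finset.mem_singleton]
                exact ⟨h', hv.2⟩
              · simpa only [PFV, Finset.mem_sdiff, Finset.mem_singleton] using h'
            have hrep : ∀ g, Exp b y χ g (fix b' y c) :=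
              fun g => Exp.repMk hγ (Exp.cfix h) (SubT.fx hS) hxR hFVR
            exact ⟨subst a y (fix b' y a), hγ.tail Trace.fixT,
              exp_subst_x hrep hxR h (fix b' y a)⟩
        · have hyB : y ∈ BV (fix b x χ) := by
            have hy1 : y ∈ BV (fix b' y a) := by simp [BV]
            have hy2 := traces_BV hγ hy1
            simp only [BV, Finset.mem_insert]
            exact Or.inr hy2
          have hyF : y ∉ FV (fix b x χ) := fun hf => (Finset.disjoint_left.1 htidy hf) hyB
          have hyP : y ∉ PFV (fix b x χ) := fun hp => hyF (pfv_subset_fv _ hp)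
          exact ⟨subst a y (fix b' y a), hγ.tail Trace.fixT,
            exp_subst hyx hyP h (Exp.cfix h)⟩

theorem clos_exp {b : Bool} {x : ℕ} {χ : Fm} (htidy : Tidy (fix b x χ)) {ρ : Fm}
    (h : Traces (fix b x χ) ρ) : ∃ γ, Traces χ γ ∧ Exp b x χ γ ρ := by
  induction h with
  | refl => exact ⟨χ, Relation.ReflTransGen.refl, Exp.repBase⟩
  | tail h1 h2 ih =>
      obtain ⟨γ, hγ, he⟩ := ih
      exact exp_step htidy he hγ _ h2

theorem cluster_subT {b : Bool} {x : ℕ} {χ : Fm} (htidy : Tidy (fix b x χ))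
    (hnot : fix b x χ ∉ Clos χ) {ρ : Fm} (hd : Traces (fix b x χ) ρ)
    (hu : Traces ρ (fix b x χ)) : SubT (fix b x χ) ρ := by
  obtain ⟨γ, hγ, he⟩ := clos_exp htidy hd
  rcases exp_cases he with rfl | hS
  · exact absurd (hγ.trans hu) hnot
  · exact hS

/-- Replacement of at least one occurrence of `ξ` by `var z`. -/
inductive Repl (ξ : Fm) (z : ℕ) : Fm → Fm → Prop
  | here : Repl ξ z ξ (var z)
  | cjL {a a' c} : Repl ξ z a a' → Repl ξ z (conj a c) (conj a' c)
  | cjR {a c c'} : Repl ξ z c c' → Repl ξ z (conj a c) (conj a c')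
  | djL {a a' c} : Repl ξ z a a' → Repl ξ z (disj a c) (disj a' c)
  | djR {a c c'} : Repl ξ z c c' → Repl ξ z (disj a c) (disj a c')
  | di {a a'} : Repl ξ z a a' → Repl ξ z (dia a) (dia a')
  | bo {a a'} : Repl ξ z a a' → Repl ξ z (box a) (box a')
  | fx {b y a a'} : Repl ξ z a a' → Repl ξ z (fix b y a) (fix b y a')

theorem subT_repl {ξ ρ : Fm} (z : ℕ) (h : SubT ξ ρ) : ∃ θ, Repl ξ z ρ θ := by
  induction h with
  | refl => exact ⟨var z, .here⟩
  | cjL _ ih => obtain ⟨θ, hθ⟩ := ih; exact ⟨_, .cjL hθ⟩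
  | cjR _ ih => obtain ⟨θ, hθ⟩ := ih; exact ⟨_, .cjR hθ⟩
  | djL _ ih => obtain ⟨θ, hθ⟩ := ih; exact ⟨_, .djL hθ⟩
  | djR _ ih => obtain ⟨θ, hθ⟩ := ih; exact ⟨_, .djR hθ⟩
  | di _ ih => obtain ⟨θ, hθ⟩ := ih; exact ⟨_, .di hθ⟩
  | bo _ ih => obtain ⟨θ, hθ⟩ := ih; exact ⟨_, .bo hθ⟩
  | fx _ ih => obtain ⟨θ, hθ⟩ := ih; exact ⟨_, .fx hθ⟩

theorem repl_BV {ξ : Fm} {z : ℕ} {ρ θ : Fm} (h : Repl ξ z ρ θ) : BV θ ⊆ BV ρ := by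
  induction h with
  | here => simp [BV]
  | cjL _ ih => exact Finset.union_subset_union ih le_rfl
  | cjR _ ih => exact Finset.union_subset_union le_rfl ih
  | djL _ ih => exact Finset.union_subset_union ih le_rfl
  | djR _ ih => exact Finset.union_subset_union le_rfl ih
  | di _ ih => exact ih
  | bo _ ih => exact ih
  | fx _ ih => exact Finset.insert_subset_insert _ ih

theorem repl_FV {ξ : Fm} {z : ℕ} {ρ θ : Fm} (h : Repl ξ z ρ θ) (hz : z ∉ BV ρ) :
    z ∈ FV θ := by
  induction h with
  | here => simp [FV]
  | cjL _ ih =>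
      simp only [BV, Finset.mem_union, not_or] at hz
      exact Finset.mem_union_left _ (ih hz.1)
  | cjR _ ih =>
      simp only [BV, Finset.mem_union, not_or] at hz
      exact Finset.mem_union_right _ (ih hz.2)
  | djL _ ih =>
      simp only [BV, Finset.mem_union, not_or] at hz
      exact Finset.mem_union_left _ (ih hz.1)
  | djR _ ih =>
      simp only [BV, Finset.mem_union, not_or] at hz
      exact Finset.mem_union_right _ (ih hz.2)
  | di _ ih => exact ih hz
  | bo _ ih => exact ih hz
  | @fx b y a a' _ ih =>
      simp only [BV, Finset.mem_insert, not_or] at hz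
      simp only [FV, Finset.mem_sdiff, Finset.mem_singleton]
      exact ⟨ih hz.2, hz.1⟩

theorem repl_subst {ξ : Fm} {z : ℕ} {ρ θ : Fm} (h : Repl ξ z ρ θ) (hzF : z ∉ FV ρ)
    (hzB : z ∉ BV ρ) : subst θ z ξ = ρ := by
  induction h with
  | here => simp [subst]
  | @cjL a a' c _ ih =>
      simp only [FV, BV, Finset.mem_union, not_or] at hzF hzB
      have hc : z ∉ PFV c := fun hp => hzF.2 (pfv_subset_fv _ hp)
      simp only [subst, ih hzF.1 hzB.1, subst_notMem ξ hc]
  | @cjR a c c' _ ih =>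
      simp only [FV, BV, Finset.mem_union, not_or] at hzF hzB
      have ha : z ∉ PFV a := fun hp => hzF.1 (pfv_subset_fv _ hp)
      simp only [subst, ih hzF.2 hzB.2, subst_notMem ξ ha]
  | @djL a a' c _ ih =>
      simp only [FV, BV, Finset.mem_union, not_or] at hzF hzB
      have hc : z ∉ PFV c := fun hp => hzF.2 (pfv_subset_fv _ hp)
      simp only [subst, ih hzF.1 hzB.1, subst_notMem ξ hc]
  | @djR a c c' _ ih =>
      simp only [FV, BV, Finset.mem_union, not_or] at hzF hzB
      have ha : z ∉ PFV a := fun hp => hzF.1 (pfv_subset_fv _ hp)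
      simp only [subst, ih hzF.2 hzB.2, subst_notMem ξ ha]
  | di _ ih => simp only [subst, ih hzF hzB]
  | bo _ ih => simp only [subst, ih hzF hzB]
  | @fx b y a a' _ ih =>
      simp only [BV, Finset.mem_insert, not_or] at hzB
      have hyz : ¬ (y = z) := fun hy => hzB.1 hy.symm
      have hzFa : z ∉ FV a := by
        simp only [FV, Finset.mem_sdiff, Finset.mem_singleton] at hzF
        intro hz
        exact hzF ⟨hz, fun hzy => hyz hzy.symm⟩
      simp only [subst, if_neg hyz, ih hzFa hzB.2]

theorem freeFor_of_disjoint (ξ : Fm) (z : ℕ) :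
    ∀ θ : Fm, Disjoint (FV ξ) (BV θ) → FreeFor ξ z θ := by
  intro θ
  induction θ with
  | var p => intro _; trivial
  | nvar p => intro _; trivial
  | tt => intro _; trivial
  | ff => intro _; trivial
  | conj φ ψ ih1 ih2 =>
      intro h
      simp only [BV, Finset.disjoint_union_right] at h
      exact ⟨ih1 h.1, ih2 h.2⟩
  | disj φ ψ ih1 ih2 =>
      intro h
      simp only [BV, Finset.disjoint_union_right] at h
      exact ⟨ih1 h.1, ih2 h.2⟩
  | dia φ ih => exact ih
  | box φ ih => exact ih
  | fix b y φ ih =>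
      intro h
      simp only [BV, Finset.disjoint_insert_right] at h
      exact Or.inr ⟨h.1, ih h.2⟩

theorem exists_fresh (s : Finset ℕ) : ∃ z, z ∉ s := by
  refine ⟨s.sup id + 1, fun h => ?_⟩
  have := Finset.le_sup (f := id) h
  simp only [id] at this
  omega


end Fm

/-- If `ξ = ηx.χ` is tidy and `ξ ∉ Clos(χ)`, then `ξ` is a free subformula of
every formula in its closure cluster. -/
theorem max_freeSubf_cluster (b : Bool) (x : ℕ) (χ : Fm)
    (htidy : Fm.Tidy (Fm.fix b x χ)) (hnot : Fm.fix b x χ ∉ Fm.Clos χ) :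
    ∀ ρ, Fm.ClosEq (Fm.fix b x χ) ρ → Fm.FreeSubf (Fm.fix b x χ) ρ := by
  intro ρ hceq
  obtain ⟨hd, hu⟩ := hceq
  have hS := Fm.cluster_subT htidy hnot hd hu
  obtain ⟨z, hz⟩ := Fm.exists_fresh (Fm.FV (Fm.fix b x χ) ∪ Fm.BV (Fm.fix b x χ))
  have hvars := Fm.traces_vars hd
  have hzF : z ∉ Fm.FV ρ := fun h => hz (hvars (Finset.mem_union_left _ h))
  have hzB : z ∉ Fm.BV ρ := fun h => hz (hvars (Finset.mem_union_right _ h))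
  obtain ⟨θ, hθ⟩ := Fm.subT_repl z hS
  refine ⟨θ, z, Fm.repl_FV hθ hzB, ?_, Fm.repl_subst hθ hzF hzB⟩
  apply Fm.freeFor_of_disjoint
  exact htidy.mono_right ((Fm.repl_BV hθ).trans (Fm.traces_BV hd))
end

section
/- Back-and-forth property of substitution on closure graphs: let ξ and χ be tidy formulas with BV(χ) ∩ FV(ξ) = ∅ and χ[ξ/x] tidy. Then for every φ ∈ Clos(χ) with φ ≠ x, the set of →_C-successors of φ[ξ/x] equals { ψ[ξ/x] : φ →_C ψ }. -/
namespace Fm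

/-- Variables occurring free in a positive (`var`) position. -/
def pFV : Fm → Finset ℕ
  | var p => {p}
  | nvar _ => ∅
  | tt => ∅
  | ff => ∅
  | conj φ ψ => pFV φ ∪ pFV ψ
  | disj φ ψ => pFV φ ∪ pFV ψ
  | dia φ => pFV φ
  | box φ => pFV φ
  | fix _ x φ => pFV φ \ {x}

lemma pFV_subset_FV : ∀ φ : Fm, pFV φ ⊆ FV φ := by
  intro φ
  induction φ with
  | var p => simp [pFV, FV]
  | nvar p => simp [pFV, FV]
  | tt => simp [pFV, FV]
  | ff => simp [pFV, FV]
  | conj a b iha ihb => simp only [pFV, FV]; exact Finset.union_subset_union iha ihb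
  | disj a b iha ihb => simp only [pFV, FV]; exact Finset.union_subset_union iha ihb
  | dia a ih => exact ih
  | box a ih => exact ih
  | fix b y ρ ih => simp only [pFV, FV]; exact Finset.sdiff_subset_sdiff ih subset_rfl

lemma subst_of_not_mem_pFV {x : ℕ} {ξ : Fm} : ∀ {φ : Fm}, x ∉ pFV φ → subst φ x ξ = φ := by
  intro φ
  induction φ with
  | var p => intro h; simp [pFV] at h; simp [subst, Ne.symm h]
  | nvar p => intro h; simp [subst]
  | tt => intro h; simp [subst]
  | ff => intro h; simp [subst]
  | conj a b iha ihb => intro h; simp [pFV] at h; simp [subst, iha h.1, ihb h.2]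
  | disj a b iha ihb => intro h; simp [pFV] at h; simp [subst, iha h.1, ihb h.2]
  | dia a ih => intro h; simp [pFV] at h; simp [subst, ih h]
  | box a ih => intro h; simp [pFV] at h; simp [subst, ih h]
  | fix b y ρ ih =>
      intro h
      by_cases hyx : y = x
      · simp [subst, hyx]
      · simp [pFV, Finset.mem_sdiff] at h
        have : x ∉ pFV ρ := fun hx => hyx ((h hx).symm) |>.elim
        simp [subst, hyx, ih this]

lemma pFV_subst_subset (x : ℕ) (ξ : Fm) :
    ∀ ρ : Fm, pFV (subst ρ x ξ) ⊆ (pFV ρ \ {x}) ∪ pFV ξ := by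
  intro ρ
  induction ρ with
  | var p =>
      by_cases h : p = x
      · simp [subst, h]
      · intro v hv; simp [subst, h, pFV] at hv; simp [hv, h, pFV]
  | nvar p => simp [subst, pFV]
  | tt => simp [subst, pFV]
  | ff => simp [subst, pFV]
  | conj a b iha ihb =>
      intro v hv; simp [subst, pFV] at hv ⊢
      rcases hv with hv | hv
      · have := iha hv; simp at this; tauto
      · have := ihb hv; simp at this; tauto
  | disj a b iha ihb =>
      intro v hv; simp [subst, pFV] at hv ⊢
      rcases hv with hv | hv
      · have := iha hv; simp at this; tauto
      · have := ihb hv; simp at this; tauto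
  | dia a ih => intro v hv; simp [subst, pFV] at hv ⊢; have := ih hv; simp at this; tauto
  | box a ih => intro v hv; simp [subst, pFV] at hv ⊢; have := ih hv; simp at this; tauto
  | fix b y ρ ih =>
      by_cases hyx : y = x
      · subst hyx
        intro v hv; simp [subst, pFV] at hv ⊢; tauto
      · intro v hv; simp [subst, hyx, pFV] at hv ⊢
        have := ih hv.1; simp at this; tauto

lemma BV_subst_subset (x : ℕ) (ξ : Fm) : ∀ ρ : Fm, BV (subst ρ x ξ) ⊆ BV ρ ∪ BV ξ := by
  intro ρ
  induction ρ with
  | var p => by_cases h : p = x <;> simp [subst, h, BV]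
  | nvar p => simp [subst, BV]
  | tt => simp [subst, BV]
  | ff => simp [subst, BV]
  | conj a b iha ihb =>
      intro v hv; simp [subst, BV] at hv ⊢
      rcases hv with hv | hv
      · have := iha hv; simp at this; tauto
      · have := ihb hv; simp at this; tauto
  | disj a b iha ihb =>
      intro v hv; simp [subst, BV] at hv ⊢
      rcases hv with hv | hv
      · have := iha hv; simp at this; tauto
      · have := ihb hv; simp at this; tauto
  | dia a ih => intro v hv; simp [subst, BV] at hv ⊢; have := ih hv; simp at this; tauto
  | box a ih => intro v hv; simp [subst, BV] at hv ⊢; have := ih hv; simp at this; tauto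
  | fix b y ρ ih =>
      by_cases hyx : y = x
      · rw [show subst (fix b y ρ) x ξ = fix b y ρ by simp [subst, hyx]]
        exact Finset.subset_union_left
      · intro v hv; simp [subst, hyx, BV] at hv ⊢
        rcases hv with hv | hv
        · tauto
        · have := ih hv; simp at this; tauto

lemma Trace.pfv_bv {φ ψ : Fm} (h : Trace φ ψ) : pFV ψ ⊆ pFV φ ∧ BV ψ ⊆ BV φ := by
  cases h with
  | conjL => exact ⟨Finset.subset_union_left, Finset.subset_union_left⟩
  | conjR => exact ⟨Finset.subset_union_right, Finset.subset_union_right⟩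
  | disjL => exact ⟨Finset.subset_union_left, Finset.subset_union_left⟩
  | disjR => exact ⟨Finset.subset_union_right, Finset.subset_union_right⟩
  | diaT => exact ⟨subset_rfl, subset_rfl⟩
  | boxT => exact ⟨subset_rfl, subset_rfl⟩
  | @fixT b y ρ =>
      constructor
      · intro v hv
        have := pFV_subst_subset y (fix b y ρ) ρ hv
        simp [pFV] at this ⊢
        tauto
      · intro v hv
        have := BV_subst_subset y (fix b y ρ) ρ hv
        simp [BV] at this ⊢
        tauto

lemma clos_pfv_bv {χ φ : Fm} (h : φ ∈ Clos χ) : pFV φ ⊆ pFV χ ∧ BV φ ⊆ BV χ := by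
  induction h with
  | refl => exact ⟨subset_rfl, subset_rfl⟩
  | tail _ hstep ih =>
      exact ⟨(Trace.pfv_bv hstep).1.trans ih.1, (Trace.pfv_bv hstep).2.trans ih.2⟩

lemma subst_comm {x y : ℕ} {ξ : Fm} (hxy : x ≠ y) (hy : y ∉ pFV ξ) :
    ∀ (ρ θ : Fm), x ∉ BV ρ →
      subst (subst ρ y θ) x ξ = subst (subst ρ x ξ) y (subst θ x ξ) := by
  intro ρ
  induction ρ with
  | var p =>
      intro θ _
      by_cases hpy : p = y
      · simp [subst, hpy, Ne.symm hxy]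
      · by_cases hpx : p = x
        · subst hpx; simp [subst, hpy, subst_of_not_mem_pFV hy]
        · simp [subst, hpy, hpx]
  | nvar p => intro θ _; simp [subst]
  | tt => intro θ _; simp [subst]
  | ff => intro θ _; simp [subst]
  | conj a b iha ihb => intro θ hx; simp [BV] at hx; simp [subst, iha θ hx.1, ihb θ hx.2]
  | disj a b iha ihb => intro θ hx; simp [BV] at hx; simp [subst, iha θ hx.1, ihb θ hx.2]
  | dia a ih => intro θ hx; simp [BV] at hx; simp [subst, ih θ hx]
  | box a ih => intro θ hx; simp [BV] at hx; simp [subst, ih θ hx]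
  | fix b z ρ ih =>
      intro θ hx
      simp [BV] at hx
      push_neg at hx
      have hzx : z ≠ x := fun h => hx.1 h.symm
      by_cases hzy : z = y
      · simp [subst, hzy, hzx, Ne.symm hxy]
      · simp [subst, hzy, hzx, ih θ hx.2]

end Fm

/-- Back-and-forth property of substitution on closure graphs. -/
theorem subst_back_and_forth (ξ χ : Fm) (x : ℕ)
    (h1 : Fm.Tidy ξ) (h2 : Fm.Tidy χ)
    (hdisj : Disjoint (Fm.BV χ) (Fm.FV ξ))
    (h3 : Fm.Tidy (Fm.subst χ x ξ)) :
    ∀ φ ∈ Fm.Clos χ, φ ≠ Fm.var x →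
      {ρ | Fm.Trace (Fm.subst φ x ξ) ρ} =
        {ρ | ∃ ψ, Fm.Trace φ ψ ∧ ρ = Fm.subst ψ x ξ} := by
  intro φ hφ hne
  by_cases hx : x ∈ Fm.pFV φ
  · -- x occurs (positively) free in φ
    have hsub := Fm.clos_pfv_bv hφ
    have hxFV : x ∈ Fm.FV χ := Fm.pFV_subset_FV χ (hsub.1 hx)
    have hxBV : x ∉ Fm.BV φ := fun h => Finset.disjoint_left.mp h2 hxFV (hsub.2 h)
    cases φ with
    | var p =>
        simp [Fm.pFV] at hx
        exact absurd (by rw [hx]) hne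
    | nvar p => simp [Fm.pFV] at hx
    | tt => simp [Fm.pFV] at hx
    | ff => simp [Fm.pFV] at hx
    | conj a b =>
        ext ρ
        simp only [Set.mem_setOf_eq, Fm.subst]
        constructor
        · intro h
          cases h with
          | conjL => exact ⟨a, Fm.Trace.conjL, rfl⟩
          | conjR => exact ⟨b, Fm.Trace.conjR, rfl⟩
        · rintro ⟨ψ, hψ, rfl⟩
          cases hψ with
          | conjL => exact Fm.Trace.conjL
          | conjR => exact Fm.Trace.conjR
    | disj a b =>
        ext ρ
        simp only [Set.mem_setOf_eq, Fm.subst]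
        constructor
        · intro h
          cases h with
          | disjL => exact ⟨a, Fm.Trace.disjL, rfl⟩
          | disjR => exact ⟨b, Fm.Trace.disjR, rfl⟩
        · rintro ⟨ψ, hψ, rfl⟩
          cases hψ with
          | disjL => exact Fm.Trace.disjL
          | disjR => exact Fm.Trace.disjR
    | dia a =>
        ext ρ
        simp only [Set.mem_setOf_eq, Fm.subst]
        constructor
        · intro h; cases h; exact ⟨a, Fm.Trace.diaT, rfl⟩
        · rintro ⟨ψ, hψ, rfl⟩; cases hψ; exact Fm.Trace.diaT
    | box a =>
        ext ρ
        simp only [Set.mem_setOf_eq, Fm.subst]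
        constructor
        · intro h; cases h; exact ⟨a, Fm.Trace.boxT, rfl⟩
        · rintro ⟨ψ, hψ, rfl⟩; cases hψ; exact Fm.Trace.boxT
    | fix b y ρ =>
        simp only [Fm.pFV, Finset.mem_sdiff, Finset.mem_singleton] at hx
        have hxy : x ≠ y := hx.2
        simp only [Fm.BV, Finset.mem_insert] at hxBV
        push_neg at hxBV
        have hxBVρ : x ∉ Fm.BV ρ := hxBV.2
        have hyBV : y ∈ Fm.BV χ := hsub.2 (by simp [Fm.BV])
        have hyFV : y ∉ Fm.FV ξ := Finset.disjoint_left.mp hdisj hyBV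
        have hypFV : y ∉ Fm.pFV ξ := fun h => hyFV (Fm.pFV_subset_FV ξ h)
        have hsubstfix : Fm.subst (Fm.fix b y ρ) x ξ = Fm.fix b y (Fm.subst ρ x ξ) := by
          simp [Fm.subst, Ne.symm hxy]
        have key : Fm.subst (Fm.subst ρ y (Fm.fix b y ρ)) x ξ
            = Fm.subst (Fm.subst ρ x ξ) y (Fm.fix b y (Fm.subst ρ x ξ)) := by
          rw [Fm.subst_comm hxy hypFV ρ (Fm.fix b y ρ) hxBVρ, hsubstfix]
        ext σ
        simp only [Set.mem_setOf_eq]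
        rw [hsubstfix]
        constructor
        · intro h
          cases h
          exact ⟨Fm.subst ρ y (Fm.fix b y ρ), Fm.Trace.fixT, key.symm⟩
        · rintro ⟨ψ, hψ, rfl⟩
          cases hψ
          rw [key]
          exact Fm.Trace.fixT
  · -- x does not occur positively free in φ
    ext ρ
    simp only [Set.mem_setOf_eq]
    rw [Fm.subst_of_not_mem_pFV hx]
    constructor
    · intro h
      exact ⟨ρ, h, (Fm.subst_of_not_mem_pFV (fun hr => hx ((Fm.Trace.pfv_bv h).1 hr))).symm⟩
    · rintro ⟨ψ, hψ, rfl⟩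
      rw [Fm.subst_of_not_mem_pFV (fun hr => hx ((Fm.Trace.pfv_bv hψ).1 hr))]
      exact hψ
end
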